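/- Let A be an n×n nonnegative real matrix with all row sums nonzero, and let M > 0, N ≥ 0, k ≥ 0 be integers such that A^{M+N} is irreducible. Then equality holds on either side (and hence both sides) of the bound min_{(i,j): a_{ij}^{(M)}>0} ( r_i(A^{k+M}) r_j(A^{k+N}) / (r_i(A^k) r_j(A^k)) )^{1/(M+N)} ≤ ρ(A) ≤ max_{(i,j): a_{ij}^{(M)}>0} ( r_i(A^{k+M}) r_j(A^{k+N}) / (r_i(A^k) r_j(A^k)) )^{1/(M+N)} if and only if x = (r_1(A^k),…,r_n(A^k))ᵀ is an eigenvector of A. -/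

import Mathlib

open Matrix

/-- The spectral radius of a real square matrix: the maximum modulus of its
complex eigenvalues (elements of the spectrum of the matrix over `ℂ`). -/
noncomputable def specRad {n : ℕ} (A : Matrix (Fin n) (Fin n) ℝ) : ℝ :=
  sSup ((fun μ : ℂ => ‖μ‖) '' spectrum ℂ (A.map (fun x : ℝ => (x : ℂ))))

/-- `rowSum A i` is the `i`-th row sum of `A`. -/
noncomputable def rowSum {n : ℕ} (A : Matrix (Fin n) (Fin n) ℝ) (i : Fin n) : ℝ :=
  ∑ j, A i j

/-- A square matrix is irreducible if it cannot be symmetrically permuted to a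
nontrivial block upper-triangular form; equivalently, for every nonempty proper
subset `S` of indices there is a nonzero entry leading from `S` to its complement. -/
def IsIrred {n : ℕ} (A : Matrix (Fin n) (Fin n) ℝ) : Prop :=
  ∀ S : Set (Fin n), S.Nonempty → S ≠ Set.univ → ∃ i ∈ S, ∃ j ∈ Sᶜ, A i j ≠ 0

/-!
Put `x = (r_i(A^k))_i` and `q = M + N`. Since `r(A^{k+M}) = A^M x` and `r(A^{k+N}) = A^N x`, the
quotient `(A^q x)_i / x_i` is a weighted average of the numbers
`r_i(A^{k+M}) r_j(A^{k+N}) / (x_i x_j)` over the `j` with `a_{ij}^{(M)} > 0`, so it lies between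
the `q`-th powers of the two sides of the bound. If `ρ(A)` equals one side, then
`ρ(A^q) = ρ(A)^q` and `x` is sub- or superinvariant for the irreducible matrix `A^q` with constant
`ρ(A^q)`. The strict Collatz–Wielandt inequalities, obtained by applying `(1 + A^q)^{n-1}`, which
maps nonzero nonnegative vectors to positive ones, force `A^q x = ρ(A^q) x`. Then `A x` is an
eigenvector of `A^q` for the same eigenvalue, and a positive eigenvector of an irreducible matrix
spans its eigenspace, so `A x` is a multiple of `x`. Conversely, if `A x = μ x` then every
quotient equals `μ = ρ(A)`. The lower Collatz–Wielandt bound `c ≤ ρ(B)` for `c x ≤ B x` comes from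
`c^m ≤ ‖B^m‖` and Gelfand's formula.
-/

open Filter Finset

section NonnegMatrix

variable {ι : Type*} [Fintype ι]

lemma mulVec_nonneg_of_nonneg {B : Matrix ι ι ℝ} (hB : ∀ i j, 0 ≤ B i j) {v : ι → ℝ}
    (hv : 0 ≤ v) : 0 ≤ B *ᵥ v :=
  fun i => sum_nonneg fun j _ => mul_nonneg (hB i j) (hv j)

lemma mulVec_mono_of_nonneg {B : Matrix ι ι ℝ} (hB : ∀ i j, 0 ≤ B i j) {v w : ι → ℝ}
    (h : v ≤ w) : B *ᵥ v ≤ B *ᵥ w := by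
  simpa [mulVec_sub] using mulVec_nonneg_of_nonneg hB (sub_nonneg.2 h)

lemma single_mul_le_mulVec_apply {B : Matrix ι ι ℝ} (hB : ∀ i j, 0 ≤ B i j) {v : ι → ℝ}
    (hv : 0 ≤ v) (i j : ι) : B i j * v j ≤ (B *ᵥ v) i :=
  single_le_sum (f := fun l => B i l * v l) (fun l _ => mul_nonneg (hB i l) (hv l)) (mem_univ j)

lemma exists_pos_smul_le [Nonempty ι] {x y : ι → ℝ} (hx : ∀ i, 0 < x i) (hy : ∀ i, 0 < y i) :
    ∃ ε : ℝ, 0 < ε ∧ ε • x ≤ y := by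
  obtain ⟨i₀, -, hi₀⟩ := exists_min_image univ (fun i => y i / x i) univ_nonempty
  refine ⟨y i₀ / x i₀, div_pos (hy i₀) (hx i₀), fun i => ?_⟩
  simpa [← le_div_iff₀ (hx i)] using hi₀ i (mem_univ i)

lemma mulVec_apply_le_of_forall_pos {P : Matrix ι ι ℝ} {i : ι} (hP : ∀ j, 0 ≤ P i j)
    {x v : ι → ℝ} {C : ℝ} (hx : 0 < (P *ᵥ x) i)
    (h : ∀ j, 0 < P i j → (P *ᵥ x) i * v j ≤ C * (x i * x j)) :
    (P *ᵥ v) i ≤ C * x i := by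
  refine le_of_mul_le_mul_left ?_ hx
  calc (P *ᵥ x) i * (P *ᵥ v) i = ∑ j, P i j * ((P *ᵥ x) i * v j) := by
        simp only [mulVec, dotProduct, mul_sum]; ring_nf
    _ ≤ ∑ j, P i j * (C * (x i * x j)) := by
        refine sum_le_sum fun j _ => ?_
        rcases (hP j).eq_or_lt with h0 | hpos
        · simp [← h0]
        · exact mul_le_mul_of_nonneg_left (h j hpos) hpos.le
    _ = (P *ᵥ x) i * (C * x i) := by
        simp only [mulVec, dotProduct, sum_mul]
        exact sum_congr rfl fun j _ => by ring

lemma le_mulVec_apply_of_forall_pos {P : Matrix ι ι ℝ} {i : ι} (hP : ∀ j, 0 ≤ P i j)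
    {x v : ι → ℝ} {C : ℝ} (hx : 0 < (P *ᵥ x) i)
    (h : ∀ j, 0 < P i j → C * (x i * x j) ≤ (P *ᵥ x) i * v j) :
    C * x i ≤ (P *ᵥ v) i := by
  have := mulVec_apply_le_of_forall_pos hP (v := -v) (C := -C) hx fun j hj => by
    simpa using h j hj
  simpa [mulVec_neg] using this

end NonnegMatrix

namespace IsIrred

variable {n : ℕ} {B : Matrix (Fin n) (Fin n) ℝ}

theorem eq_zero_or_pos_of_mulVec_le (hirr : IsIrred B) (hB : ∀ i j, 0 ≤ B i j)
    {z : Fin n → ℝ} (hz : 0 ≤ z) {c : ℝ} (h : B *ᵥ z ≤ c • z) : z = 0 ∨ ∀ i, 0 < z i := by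
  by_contra! ⟨hz0, i₀, hi₀⟩
  obtain ⟨j₀, hj₀⟩ := Function.ne_iff.1 hz0
  obtain ⟨i, hi, j, hj, hij⟩ := hirr {i | z i = 0} ⟨i₀, le_antisymm hi₀ (hz i₀)⟩
    (Set.ne_univ_iff_exists_notMem _ |>.2 ⟨j₀, hj₀⟩)
  have hpos : 0 < (B *ᵥ z) i :=
    (mul_pos ((hB i j).lt_of_ne' hij) ((hz j).lt_of_ne' hj)).trans_le
      (single_mul_le_mulVec_apply hB hz i j)
  have hle := h i
  rw [Pi.smul_apply, smul_eq_mul, show z i = 0 from hi, mul_zero] at hle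
  exact hpos.not_ge hle

theorem exists_eq_smul_of_mulVec_eq (hirr : IsIrred B) (hB : ∀ i j, 0 ≤ B i j)
    {x w : Fin n → ℝ} (hx : ∀ i, 0 < x i) {c : ℝ} (hBx : B *ᵥ x = c • x)
    (hBw : B *ᵥ w = c • w) : ∃ t : ℝ, w = t • x := by
  rcases isEmpty_or_nonempty (Fin n) with hn | hn
  · exact ⟨0, Subsingleton.elim _ _⟩
  obtain ⟨i₀, -, hi₀⟩ := exists_min_image univ (fun i => w i / x i) univ_nonempty
  set t := w i₀ / x i₀
  have hz : 0 ≤ w - t • x := fun i => by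
    simpa [← le_div_iff₀ (hx i)] using hi₀ i (mem_univ i)
  have hBz : B *ᵥ (w - t • x) = c • (w - t • x) := by
    rw [mulVec_sub, mulVec_smul, hBx, hBw, smul_sub, smul_comm]
  have hzi₀ : (w - t • x) i₀ = 0 := by
    simp [t, div_mul_cancel₀ _ (hx i₀).ne']
  rcases hirr.eq_zero_or_pos_of_mulVec_le hB hz hBz.le with h | h
  · exact ⟨t, sub_eq_zero.1 h⟩
  · exact absurd hzi₀ (h i₀).ne'

lemma le_one_add_mulVec (hB : ∀ i j, 0 ≤ B i j) {w : Fin n → ℝ} (hw : 0 ≤ w) :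
    w ≤ (1 + B) *ᵥ w := fun i => by
  simpa [add_mulVec] using mulVec_nonneg_of_nonneg hB hw i

lemma card_pos_lt_card_pos_one_add_mulVec (hirr : IsIrred B) (hB : ∀ i j, 0 ≤ B i j)
    {w : Fin n → ℝ} (hw : 0 ≤ w) (hpos : ∃ i, 0 < w i) (hnpos : ∃ i, w i ≤ 0) :
    #{i | 0 < w i} < #{i | 0 < ((1 + B) *ᵥ w) i} := by
  obtain ⟨i, hi, j, hj, hij⟩ := hirr {i | w i ≤ 0} hnpos
    (Set.ne_univ_iff_exists_notMem _ |>.2 (by simpa using hpos))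
  simp only [Set.mem_compl_iff, Set.mem_ofPred_eq, not_le] at hi hj
  refine card_lt_card ⟨fun l => by simpa using fun hl => hl.trans_le (le_one_add_mulVec hB hw l),
    fun hsub => ?_⟩
  have : 0 < ((1 + B) *ᵥ w) i := by
    have := (mul_pos ((hB i j).lt_of_ne' hij) hj).trans_le (single_mul_le_mulVec_apply hB hw i j)
    simpa [add_mulVec] using add_pos_of_nonneg_of_pos (hw i) this
  have := hsub (by simpa using this)
  simp only [mem_filter, mem_univ, true_and] at this
  linarith

theorem one_add_pow_mulVec_pos (hirr : IsIrred B) (hB : ∀ i j, 0 ≤ B i j)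
    {z : Fin n → ℝ} (hz : 0 ≤ z) (hz0 : z ≠ 0) (i : Fin n) :
    0 < ((1 + B) ^ (n - 1) *ᵥ z) i := by
  have hB' : ∀ i j, 0 ≤ (1 + B) i j := fun i j => by
    by_cases h : i = j <;> simp [one_apply, h, hB, add_nonneg zero_le_one]
  have key : ∀ m, min n (m + 1) ≤ #{i | 0 < ((1 + B) ^ m *ᵥ z) i} := by
    intro m
    induction m with
    | zero =>
      obtain ⟨j, hj⟩ := Function.ne_iff.1 hz0
      have : 0 < #{i | 0 < ((1 + B) ^ 0 *ᵥ z) i} :=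
        card_pos.2 ⟨j, by simpa using (hz j).lt_of_ne' hj⟩
      omega
    | succ m ih =>
      rw [pow_succ', ← mulVec_mulVec]
      set w := (1 + B) ^ m *ᵥ z
      have hw : 0 ≤ w := mulVec_nonneg_of_nonneg (pow_apply_nonneg hB' m) hz
      by_cases hall : ∀ i, 0 < w i
      · have : #{i | 0 < ((1 + B) *ᵥ w) i} = n := by
          rw [filter_true_of_mem fun i _ => (hall i).trans_le (le_one_add_mulVec hB hw i),
            card_univ, Fintype.card_fin]
        omega
      · push Not at hall
        have hpos : ∃ i, 0 < w i := by
          obtain ⟨i, -⟩ := hall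
          have : 0 < #{i | 0 < w i} := by have := i.pos; omega
          obtain ⟨j, hj⟩ := card_pos.1 this
          exact ⟨j, by simpa using hj⟩
        have := card_pos_lt_card_pos_one_add_mulVec hirr hB hw hpos hall
        omega
  have hcard := key (n - 1)
  rw [Nat.sub_add_cancel i.pos, min_self] at hcard
  have hall := eq_univ_of_card {i | 0 < ((1 + B) ^ (n - 1) *ᵥ z) i} <|
    (card_le_univ _).antisymm (by rwa [Fintype.card_fin])
  have hi := mem_univ i
  rw [← hall, mem_filter] at hi
  exact hi.2

end IsIrred

lemma map_ofReal_pow {ι : Type*} [Fintype ι] [DecidableEq ι] (B : Matrix ι ι ℝ) (m : ℕ) :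
    (B ^ m).map ((↑) : ℝ → ℂ) = B.map ((↑) : ℝ → ℂ) ^ m :=
  Matrix.map_pow B Complex.ofRealHom m

section SpectralRadius

variable {n : ℕ}

lemma exists_mulVec_eq_smul_of_mem_spectrum {ι : Type*} [Fintype ι] [DecidableEq ι]
    {B : Matrix ι ι ℂ} {μ : ℂ} (h : μ ∈ spectrum ℂ B) : ∃ v ≠ 0, B *ᵥ v = μ • v := by
  rw [spectrum.mem_iff, isUnit_iff_isUnit_det, isUnit_iff_ne_zero, not_not,
    ← exists_mulVec_eq_zero_iff] at h
  obtain ⟨v, hv, hμv⟩ := h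
  rw [sub_mulVec, Algebra.algebraMap_eq_smul_one, smul_mulVec, one_mulVec, sub_eq_zero] at hμv
  exact ⟨v, hv, hμv.symm⟩

lemma norm_le_specRad {A : Matrix (Fin n) (Fin n) ℝ} {μ : ℂ}
    (hμ : μ ∈ spectrum ℂ (A.map ((↑) : ℝ → ℂ))) : ‖μ‖ ≤ specRad A :=
  le_csSup ((finite_spectrum _).image _).bddAbove (Set.mem_image_of_mem _ hμ)

lemma specRad_nonneg (A : Matrix (Fin n) (Fin n) ℝ) : 0 ≤ specRad A :=
  Real.sSup_nonneg <| by rintro _ ⟨μ, -, rfl⟩; exact norm_nonneg μ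

lemma specRad_fin_zero (A : Matrix (Fin 0) (Fin 0) ℝ) : specRad A = 0 := by
  simp [specRad]

lemma specRad_pow [NeZero n] (A : Matrix (Fin n) (Fin n) ℝ) (m : ℕ) :
    specRad (A ^ m) = specRad A ^ m := by
  set σ := spectrum ℂ (A.map ((↑) : ℝ → ℂ))
  have hσ : σ.Nonempty := spectrum.nonempty_of_isAlgClosed_of_finiteDimensional ℂ _
  have hmax : IsGreatest ((‖·‖) '' σ) (specRad A) :=
    ⟨(hσ.image _).csSup_mem ((finite_spectrum _).image _), fun _ h => le_csSup
      ((finite_spectrum _).image _).bddAbove h⟩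
  have hmono : MonotoneOn (· ^ m) ((‖·‖) '' σ) := by
    rintro _ ⟨μ, -, rfl⟩ _ - h; exact pow_le_pow_left₀ (norm_nonneg μ) h m
  have : (‖·‖) '' spectrum ℂ ((A ^ m).map ((↑) : ℝ → ℂ)) = (· ^ m) '' ((‖·‖) '' σ) := by
    rw [map_ofReal_pow, spectrum.map_pow_of_nonempty hσ, Set.image_image,
      Set.image_image]
    simp [norm_pow, σ]
  rw [specRad, this, (hmono.map_isGreatest hmax).csSup_eq]

lemma specRad_le_of_mulVec_le [NeZero n] {B : Matrix (Fin n) (Fin n) ℝ} (hB : ∀ i j, 0 ≤ B i j)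
    {x : Fin n → ℝ} (hx : ∀ i, 0 < x i) {c : ℝ} (h : B *ᵥ x ≤ c • x) : specRad B ≤ c := by
  refine csSup_le ((spectrum.nonempty_of_isAlgClosed_of_finiteDimensional ℂ _).image _) ?_
  rintro _ ⟨μ, hμ, rfl⟩
  obtain ⟨v, hv0, hv⟩ := exists_mulVec_eq_smul_of_mem_spectrum hμ
  obtain ⟨i, -, hi⟩ := exists_max_image univ (fun l => ‖v l‖ / x l) univ_nonempty
  have hvx : ∀ j, ‖v j‖ ≤ ‖v i‖ / x i * x j := fun j =>
    (div_le_iff₀ (hx j)).1 (hi j (mem_univ j))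
  have hvi : 0 < ‖v i‖ := by
    obtain ⟨j, hj⟩ := Function.ne_iff.1 hv0
    have := (norm_pos_iff.2 hj).trans_le (hvx j)
    exact (div_pos_iff_of_pos_right (hx i)).1 (pos_of_mul_pos_left this (hx j).le)
  refine le_of_mul_le_mul_right ?_ hvi
  calc ‖μ‖ * ‖v i‖ = ‖∑ j, (B i j : ℂ) * v j‖ := by
        rw [← norm_mul, ← smul_eq_mul, ← Pi.smul_apply, ← hv]; rfl
    _ ≤ ∑ j, B i j * ‖v j‖ := by
        refine (norm_sum_le _ _).trans_eq (sum_congr rfl fun j _ => ?_)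
        rw [norm_mul, Complex.norm_real, Real.norm_of_nonneg (hB i j)]
    _ ≤ ∑ j, B i j * (‖v i‖ / x i * x j) :=
        sum_le_sum fun j _ => mul_le_mul_of_nonneg_left (hvx j) (hB i j)
    _ = ‖v i‖ / x i * (B *ᵥ x) i := by
        simp only [mulVec, dotProduct, mul_sum]; exact sum_congr rfl fun j _ => by ring
    _ ≤ ‖v i‖ / x i * (c * x i) := mul_le_mul_of_nonneg_left (h i) (div_pos hvi (hx i)).le
    _ = c * ‖v i‖ := by have := (hx i).ne'; field_simp

end SpectralRadius

section Gelfand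

attribute [local instance] Matrix.linftyOpNormedRing Matrix.linftyOpNormedAlgebra

variable {n : ℕ}

lemma pow_le_norm_pow_of_smul_le_mulVec [NeZero n] {B : Matrix (Fin n) (Fin n) ℝ}
    (hB : ∀ i j, 0 ≤ B i j) {x : Fin n → ℝ} (hx : ∀ i, 0 < x i) {c : ℝ} (hc : 0 ≤ c)
    (h : c • x ≤ B *ᵥ x) (m : ℕ) : c ^ m ≤ ‖B ^ m‖ := by
  have hpow : c ^ m • x ≤ B ^ m *ᵥ x := by
    induction m with
    | zero => simp
    | succ m ih =>
      calc c ^ (m + 1) • x = c ^ m • (c • x) := by rw [pow_succ, mul_smul]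
        _ ≤ c ^ m • (B *ᵥ x) := smul_le_smul_of_nonneg_left h (pow_nonneg hc m)
        _ = B *ᵥ (c ^ m • x) := (mulVec_smul _ _ _).symm
        _ ≤ B *ᵥ (B ^ m *ᵥ x) := mulVec_mono_of_nonneg hB ih
        _ = B ^ (m + 1) *ᵥ x := by rw [mulVec_mulVec, pow_succ']
  have hxn : 0 < ‖x‖ := norm_pos_iff.2 fun h0 => (hx default).ne' (congrFun h0 default)
  refine le_of_mul_le_mul_right ?_ hxn
  calc c ^ m * ‖x‖ = ‖c ^ m • x‖ := by rw [norm_smul, Real.norm_of_nonneg (pow_nonneg hc m)]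
    _ ≤ ‖B ^ m *ᵥ x‖ := (pi_norm_le_iff_of_nonneg (norm_nonneg _)).2 fun i => by
        rw [Pi.smul_apply, smul_eq_mul,
          Real.norm_of_nonneg (mul_nonneg (pow_nonneg hc m) (hx i).le)]
        exact (hpow i).trans ((le_abs_self _).trans (norm_le_pi_norm (B ^ m *ᵥ x) i))
    _ ≤ ‖B ^ m‖ * ‖x‖ := linfty_opNorm_mulVec _ _

lemma le_specRad_of_smul_le_mulVec [NeZero n] {B : Matrix (Fin n) (Fin n) ℝ}
    (hB : ∀ i j, 0 ≤ B i j) {x : Fin n → ℝ} (hx : ∀ i, 0 < x i) {c : ℝ} (hc : 0 ≤ c)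
    (h : c • x ≤ B *ᵥ x) : c ≤ specRad B := by
  have hnorm : ∀ m, ‖B.map ((↑) : ℝ → ℂ) ^ m‖ = ‖B ^ m‖ := fun m => by
    rw [← map_ofReal_pow]
    simp [linfty_opNorm_def]
  set Bc := B.map ((↑) : ℝ → ℂ)
  have hlow : ∀ᶠ m : ℕ in atTop, ENNReal.ofReal c ≤ ENNReal.ofReal (‖Bc ^ m‖ ^ (1 / m : ℝ)) := by
    filter_upwards [eventually_ne_atTop 0] with m hm
    refine ENNReal.ofReal_le_ofReal ?_
    rw [hnorm, ← Real.pow_rpow_inv_natCast hc hm, one_div]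
    exact Real.rpow_le_rpow (pow_nonneg hc m)
      (pow_le_norm_pow_of_smul_le_mulVec hB hx hc h m) (by positivity)
  have hρ : spectralRadius ℂ Bc ≤ ENNReal.ofReal (specRad B) :=
    iSup₂_le fun μ hμ =>
      (ofReal_norm μ).symm.trans_le (ENNReal.ofReal_le_ofReal (norm_le_specRad hμ))
  rw [← ENNReal.ofReal_le_ofReal_iff (specRad_nonneg B)]
  exact (ge_of_tendsto (spectrum.pow_norm_pow_one_div_tendsto_nhds_spectralRadius Bc) hlow).trans
    hρ

end Gelfand

lemma specRad_eq_of_mulVec_eq_smul {n : ℕ} [NeZero n] {B : Matrix (Fin n) (Fin n) ℝ}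
    (hB : ∀ i j, 0 ≤ B i j) {x : Fin n → ℝ} (hx : ∀ i, 0 < x i) {μ : ℝ} (h : B *ᵥ x = μ • x) :
    specRad B = μ := by
  have hμ : 0 ≤ μ := by
    have := mulVec_nonneg_of_nonneg hB (fun i => (hx i).le) default
    rw [h, Pi.smul_apply, smul_eq_mul] at this
    exact nonneg_of_mul_nonneg_left this (hx default)
  exact (specRad_le_of_mulVec_le hB hx h.le).antisymm (le_specRad_of_smul_le_mulVec hB hx hμ h.ge)

namespace IsIrred

variable {n : ℕ} [NeZero n] {B : Matrix (Fin n) (Fin n) ℝ}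

theorem mulVec_eq_smul_of_mulVec_le (hirr : IsIrred B) (hB : ∀ i j, 0 ≤ B i j)
    {x : Fin n → ℝ} (hx : ∀ i, 0 < x i) {c : ℝ} (hc : specRad B = c) (h : B *ᵥ x ≤ c • x) :
    B *ᵥ x = c • x := by
  by_contra hne
  have hCx := hirr.one_add_pow_mulVec_pos hB (fun i => (hx i).le)
    fun h0 => (hx default).ne' (congrFun h0 default)
  obtain ⟨ε, hε, hεle⟩ := exists_pos_smul_le hCx
    (hirr.one_add_pow_mulVec_pos hB (sub_nonneg.2 h) (sub_ne_zero.2 (Ne.symm hne)))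
  set C := (1 + B) ^ (n - 1)
  have hCB : C * B = B * C := (((Commute.one_left B).add_left (.refl B)).pow_left _).eq
  have hCd : C *ᵥ (c • x - B *ᵥ x) = c • (C *ᵥ x) - B *ᵥ (C *ᵥ x) := by
    rw [mulVec_sub, mulVec_smul, mulVec_mulVec, hCB, ← mulVec_mulVec]
  have : B *ᵥ (C *ᵥ x) ≤ (c - ε) • (C *ᵥ x) := fun i => by
    have := hεle i
    rw [hCd] at this
    simp only [Pi.smul_apply, Pi.sub_apply, smul_eq_mul] at this ⊢
    linarith
  linarith [specRad_le_of_mulVec_le hB hCx this]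

theorem mulVec_eq_smul_of_smul_le_mulVec (hirr : IsIrred B) (hB : ∀ i j, 0 ≤ B i j)
    {x : Fin n → ℝ} (hx : ∀ i, 0 < x i) {c : ℝ} (hc : specRad B = c) (h : c • x ≤ B *ᵥ x) :
    B *ᵥ x = c • x := by
  by_contra hne
  have hCx := hirr.one_add_pow_mulVec_pos hB (fun i => (hx i).le)
    fun h0 => (hx default).ne' (congrFun h0 default)
  obtain ⟨ε, hε, hεle⟩ := exists_pos_smul_le hCx
    (hirr.one_add_pow_mulVec_pos hB (sub_nonneg.2 h) (sub_ne_zero.2 hne))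
  set C := (1 + B) ^ (n - 1)
  have hCB : C * B = B * C := (((Commute.one_left B).add_left (.refl B)).pow_left _).eq
  have hCd : C *ᵥ (B *ᵥ x - c • x) = B *ᵥ (C *ᵥ x) - c • (C *ᵥ x) := by
    rw [mulVec_sub, mulVec_smul, mulVec_mulVec, hCB, ← mulVec_mulVec]
  have : (c + ε) • (C *ᵥ x) ≤ B *ᵥ (C *ᵥ x) := fun i => by
    have := hεle i
    rw [hCd] at this
    simp only [Pi.smul_apply, Pi.sub_apply, smul_eq_mul] at this ⊢
    linarith
  have hc0 : 0 ≤ c + ε := by linarith [specRad_nonneg B]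
  linarith [le_specRad_of_smul_le_mulVec hB hCx hc0 this]

end IsIrred

section RowSums

variable {n : ℕ} {A : Matrix (Fin n) (Fin n) ℝ}

lemma rowSum_eq_mulVec_one (A : Matrix (Fin n) (Fin n) ℝ) : rowSum A = A *ᵥ 1 :=
  funext fun i => by simp [rowSum, mulVec, dotProduct]

lemma rowSum_pow_add (A : Matrix (Fin n) (Fin n) ℝ) (a b : ℕ) :
    rowSum (A ^ (a + b)) = A ^ b *ᵥ rowSum (A ^ a) := by
  rw [rowSum_eq_mulVec_one, rowSum_eq_mulVec_one, add_comm, pow_add, mulVec_mulVec]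

lemma rowSum_pow_pos (hA : ∀ i j, 0 ≤ A i j) (hr : ∀ i, rowSum A i ≠ 0) (m : ℕ) (i : Fin n) :
    0 < rowSum (A ^ m) i := by
  induction m generalizing i with
  | zero => simp [rowSum, one_apply]
  | succ m ih =>
    obtain ⟨j, -, hj⟩ := exists_ne_zero_of_sum_ne_zero (hr i)
    rw [rowSum_pow_add, pow_one]
    exact sum_pos' (fun l _ => mul_nonneg (hA i l) (ih l).le)
      ⟨j, mem_univ j, mul_pos ((hA i j).lt_of_ne' hj) (ih j)⟩

lemma pow_mulVec_eq_smul {x : Fin n → ℝ} {μ : ℝ} (h : A *ᵥ x = μ • x) (m : ℕ) :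
    A ^ m *ᵥ x = μ ^ m • x := by
  induction m with
  | zero => simp
  | succ m ih => rw [pow_succ, ← mulVec_mulVec, h, mulVec_smul, ih, smul_smul, pow_succ']

end RowSums

noncomputable def rowSumRatio {n : ℕ} (A : Matrix (Fin n) (Fin n) ℝ) (M N k : ℕ) (i j : Fin n) :
    ℝ :=
  (rowSum (A ^ (k + M)) i * rowSum (A ^ (k + N)) j / (rowSum (A ^ k) i * rowSum (A ^ k) j)) ^
    (((M : ℝ) + N))⁻¹

def rowSumRatioSet {n : ℕ} (A : Matrix (Fin n) (Fin n) ℝ) (M N k : ℕ) : Set ℝ :=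
  {x | ∃ i j : Fin n, 0 < (A ^ M) i j ∧ x = rowSumRatio A M N k i j}

section RowSumRatio

variable {n : ℕ} {A : Matrix (Fin n) (Fin n) ℝ} {M N k : ℕ}

lemma rowSumRatioSet_finite : (rowSumRatioSet A M N k).Finite :=
  (Set.finite_range fun p : Fin n × Fin n => rowSumRatio A M N k p.1 p.2).subset <| by
    rintro _ ⟨i, j, -, rfl⟩; exact ⟨(i, j), rfl⟩

lemma rowSumRatio_le_iff (hA : ∀ i j, 0 ≤ A i j) (hr : ∀ i, rowSum A i ≠ 0) (hMN : 0 < M + N)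
    {β : ℝ} (hβ : 0 ≤ β) (i j : Fin n) :
    rowSumRatio A M N k i j ≤ β ↔
      rowSum (A ^ (k + M)) i * rowSum (A ^ (k + N)) j ≤
        β ^ (M + N) * (rowSum (A ^ k) i * rowSum (A ^ k) j) := by
  have hpos := rowSum_pow_pos hA hr
  have hx := mul_pos (hpos k i) (hpos k j)
  rw [rowSumRatio, Real.rpow_inv_le_iff_of_pos (div_pos (mul_pos (hpos _ i) (hpos _ j)) hx).le hβ
    (by exact_mod_cast hMN), div_le_iff₀ hx, ← Nat.cast_add, Real.rpow_natCast]

lemma le_rowSumRatio_iff (hA : ∀ i j, 0 ≤ A i j) (hr : ∀ i, rowSum A i ≠ 0) (hMN : 0 < M + N)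
    {β : ℝ} (hβ : 0 ≤ β) (i j : Fin n) :
    β ≤ rowSumRatio A M N k i j ↔
      β ^ (M + N) * (rowSum (A ^ k) i * rowSum (A ^ k) j) ≤
        rowSum (A ^ (k + M)) i * rowSum (A ^ (k + N)) j := by
  have hpos := rowSum_pow_pos hA hr
  have hx := mul_pos (hpos k i) (hpos k j)
  rw [rowSumRatio, Real.le_rpow_inv_iff_of_pos hβ (div_pos (mul_pos (hpos _ i) (hpos _ j)) hx).le
    (by exact_mod_cast hMN), le_div_iff₀ hx, ← Nat.cast_add, Real.rpow_natCast]

lemma pow_add_mulVec_le_of_forall_rowSumRatio_le (hA : ∀ i j, 0 ≤ A i j)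
    (hr : ∀ i, rowSum A i ≠ 0) (hMN : 0 < M + N) {β : ℝ} (hβ : 0 ≤ β)
    (h : ∀ i j, 0 < (A ^ M) i j → rowSumRatio A M N k i j ≤ β) :
    A ^ (M + N) *ᵥ rowSum (A ^ k) ≤ β ^ (M + N) • rowSum (A ^ k) := fun i => by
  rw [pow_add A M N, ← mulVec_mulVec, ← rowSum_pow_add, Pi.smul_apply, smul_eq_mul]
  refine mulVec_apply_le_of_forall_pos (pow_apply_nonneg hA M i) ?_ fun j hj => ?_
  · simpa [← rowSum_pow_add] using rowSum_pow_pos hA hr (k + M) i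
  · rw [← rowSum_pow_add]
    exact (rowSumRatio_le_iff hA hr hMN hβ i j).1 (h i j hj)

lemma smul_le_pow_add_mulVec_of_forall_le_rowSumRatio (hA : ∀ i j, 0 ≤ A i j)
    (hr : ∀ i, rowSum A i ≠ 0) (hMN : 0 < M + N) {β : ℝ} (hβ : 0 ≤ β)
    (h : ∀ i j, 0 < (A ^ M) i j → β ≤ rowSumRatio A M N k i j) :
    β ^ (M + N) • rowSum (A ^ k) ≤ A ^ (M + N) *ᵥ rowSum (A ^ k) := fun i => by
  rw [pow_add A M N, ← mulVec_mulVec, ← rowSum_pow_add, Pi.smul_apply, smul_eq_mul]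
  refine le_mulVec_apply_of_forall_pos (pow_apply_nonneg hA M i) ?_ fun j hj => ?_
  · simpa [← rowSum_pow_add] using rowSum_pow_pos hA hr (k + M) i
  · rw [← rowSum_pow_add]
    exact (le_rowSumRatio_iff hA hr hMN hβ i j).1 (h i j hj)

end RowSumRatio

section EqualityCase

variable {n : ℕ} {A : Matrix (Fin n) (Fin n) ℝ} {M N k : ℕ}

lemma exists_mulVec_eq_smul_of_pow_mulVec_eq_smul {q : ℕ} (hA : ∀ i j, 0 ≤ A i j)
    (hirr : IsIrred (A ^ q)) {x : Fin n → ℝ} (hx : ∀ i, 0 < x i) {c : ℝ}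
    (h : A ^ q *ᵥ x = c • x) : ∃ μ : ℝ, A *ᵥ x = μ • x :=
  hirr.exists_eq_smul_of_mulVec_eq (pow_apply_nonneg hA q) hx h <| by
    rw [mulVec_mulVec, ← pow_succ, pow_succ', ← mulVec_mulVec, h, mulVec_smul]

variable [NeZero n]

lemma exists_mulVec_eq_smul_of_specRad_eq_sSup (hA : ∀ i j, 0 ≤ A i j)
    (hr : ∀ i, rowSum A i ≠ 0) (hM : 0 < M) (hirr : IsIrred (A ^ (M + N)))
    (h : specRad A = sSup (rowSumRatioSet A M N k)) :
    ∃ μ : ℝ, A *ᵥ rowSum (A ^ k) = μ • rowSum (A ^ k) := by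
  have hx := rowSum_pow_pos hA hr k
  have hle := pow_add_mulVec_le_of_forall_rowSumRatio_le (k := k) hA hr (by omega)
    (specRad_nonneg A) fun i j hij => h ▸ le_csSup rowSumRatioSet_finite.bddAbove ⟨i, j, hij, rfl⟩
  exact exists_mulVec_eq_smul_of_pow_mulVec_eq_smul hA hirr hx <|
    hirr.mulVec_eq_smul_of_mulVec_le (pow_apply_nonneg hA _) hx (specRad_pow A _) hle

lemma exists_mulVec_eq_smul_of_specRad_eq_sInf (hA : ∀ i j, 0 ≤ A i j)
    (hr : ∀ i, rowSum A i ≠ 0) (hM : 0 < M) (hirr : IsIrred (A ^ (M + N)))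
    (h : specRad A = sInf (rowSumRatioSet A M N k)) :
    ∃ μ : ℝ, A *ᵥ rowSum (A ^ k) = μ • rowSum (A ^ k) := by
  have hx := rowSum_pow_pos hA hr k
  have hle := smul_le_pow_add_mulVec_of_forall_le_rowSumRatio (k := k) hA hr (by omega)
    (specRad_nonneg A) fun i j hij => h ▸ csInf_le rowSumRatioSet_finite.bddBelow ⟨i, j, hij, rfl⟩
  exact exists_mulVec_eq_smul_of_pow_mulVec_eq_smul hA hirr hx <|
    hirr.mulVec_eq_smul_of_smul_le_mulVec (pow_apply_nonneg hA _) hx (specRad_pow A _) hle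

lemma rowSumRatioSet_eq_singleton_of_mulVec_eq_smul (hA : ∀ i j, 0 ≤ A i j)
    (hr : ∀ i, rowSum A i ≠ 0) (hM : 0 < M) {μ : ℝ} (hμ : 0 ≤ μ)
    (h : A *ᵥ rowSum (A ^ k) = μ • rowSum (A ^ k)) : rowSumRatioSet A M N k = {μ} := by
  have hprod : ∀ i j, rowSum (A ^ (k + M)) i * rowSum (A ^ (k + N)) j =
      μ ^ (M + N) * (rowSum (A ^ k) i * rowSum (A ^ k) j) := fun i j => by
    simp only [rowSum_pow_add, pow_mulVec_eq_smul h, Pi.smul_apply, smul_eq_mul]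
    ring
  have hval : ∀ i j, rowSumRatio A M N k i j = μ := fun i j =>
    le_antisymm ((rowSumRatio_le_iff hA hr (by omega) hμ i j).2 (hprod i j).le)
      ((le_rowSumRatio_iff hA hr (by omega) hμ i j).2 (hprod i j).ge)
  obtain ⟨j, -, hj⟩ : ∃ j ∈ univ, (0 : ℝ) < (A ^ M) default j :=
    exists_lt_of_sum_lt (by simpa [rowSum] using rowSum_pow_pos hA hr M default)
  refine Set.eq_singleton_iff_unique_mem.2 ⟨⟨default, j, hj, (hval _ _).symm⟩, ?_⟩
  rintro _ ⟨i, j, -, rfl⟩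
  exact hval i j

end EqualityCase

/-- Theorem 7 of the paper, equality part.
For a nonnegative matrix `A` with nonzero row sums, `M > 0`, `N ≥ 0`, `k ≥ 0`, such that
`A^{M+N}` is irreducible, equality holds on either side (and hence both sides) of the
generalized Xu–Xu bound iff `x = (r_1(A^k),…,r_n(A^k))ᵀ` is an eigenvector of `A`. -/
theorem stmt7 {n : ℕ} (A : Matrix (Fin n) (Fin n) ℝ)
    (hA : ∀ i j, 0 ≤ A i j) (hr : ∀ i, rowSum A i ≠ 0) (M N k : ℕ) (hM : 0 < M)
    (hirr : IsIrred (A ^ (M + N))) :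
    (specRad A = sSup {x : ℝ | ∃ i j : Fin n, 0 < (A ^ M) i j ∧
        x = (rowSum (A ^ (k + M)) i * rowSum (A ^ (k + N)) j /
              (rowSum (A ^ k) i * rowSum (A ^ k) j)) ^ (((M : ℝ) + N))⁻¹} ↔
      ∃ μ : ℝ, A.mulVec (fun i => rowSum (A ^ k) i) = μ • fun i => rowSum (A ^ k) i) ∧
    (specRad A = sInf {x : ℝ | ∃ i j : Fin n, 0 < (A ^ M) i j ∧
        x = (rowSum (A ^ (k + M)) i * rowSum (A ^ (k + N)) j /
              (rowSum (A ^ k) i * rowSum (A ^ k) j)) ^ (((M : ℝ) + N))⁻¹} ↔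
      ∃ μ : ℝ, A.mulVec (fun i => rowSum (A ^ k) i) = μ • fun i => rowSum (A ^ k) i) := by
  change (specRad A = sSup (rowSumRatioSet A M N k) ↔ _) ∧
    (specRad A = sInf (rowSumRatioSet A M N k) ↔ _)
  rcases Nat.eq_zero_or_pos n with rfl | hn
  · have hS : rowSumRatioSet A M N k = ∅ :=
      Set.eq_empty_iff_forall_notMem.2 fun _ ⟨i, _⟩ => i.elim0
    simp [specRad_fin_zero, hS]
  have : NeZero n := ⟨hn.ne'⟩
  have hback : (∃ μ : ℝ, A *ᵥ rowSum (A ^ k) = μ • rowSum (A ^ k)) →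
      specRad A = sSup (rowSumRatioSet A M N k) ∧ specRad A = sInf (rowSumRatioSet A M N k) := by
    rintro ⟨μ, hμ⟩
    have hρ := specRad_eq_of_mulVec_eq_smul hA (rowSum_pow_pos hA hr k) hμ
    rw [rowSumRatioSet_eq_singleton_of_mulVec_eq_smul hA hr hM (hρ ▸ specRad_nonneg A) hμ,
      csSup_singleton, csInf_singleton]
    exact ⟨hρ, hρ⟩
  exact ⟨⟨exists_mulVec_eq_smul_of_specRad_eq_sSup hA hr hM hirr, fun h => (hback h).1⟩,
    ⟨exists_mulVec_eq_smul_of_specRad_eq_sInf hA hr hM hirr, fun h => (hback h).2⟩⟩
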